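/- Let B be a finite set of permutations. Av(B) contains only finitely many of the vertical parallel alternations σ_m (m ≥ 1) if and only if B contains a permutation that avoids all three of the permutations 123, 3142, and 3412. -/

import Mathlib

/-- A list of naturals is a permutation (in one-line notation) of `1,…,n`
where `n` is its length. -/
def IsPermList (l : List ℕ) : Prop :=
  l.Perm ((List.range l.length).map (· + 1))

/-- `f` is an occurrence of the pattern `β` in `π`: a strictly increasing
choice of indices of `π` whose entries are order isomorphic to `β`. -/
def IsOccurrence (π β : List ℕ) (f : Fin β.length → Fin π.length) : Prop :=
  StrictMono f ∧ ∀ s t : Fin β.length, π.get (f s) < π.get (f t) ↔ β.get s < β.get t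

/-- `π` contains the pattern `β`. -/
def PContains (π β : List ℕ) : Prop :=
  ∃ f : Fin β.length → Fin π.length, IsOccurrence π β f

/-- `π` avoids the pattern `β`. -/
def PAvoids (π β : List ℕ) : Prop :=
  ¬ PContains π β

/-- The class of permutations avoiding every member of `B`. -/
def Av (B : Set (List ℕ)) : Set (List ℕ) :=
  {π | IsPermList π ∧ ∀ β ∈ B, PAvoids π β}

/-- Insert a new maximum entry at (0-indexed) position `i` of `l`. -/
def insertMax (l : List ℕ) (i : ℕ) : List ℕ :=
  l.insertIdx i (l.length + 1)

/-- Position `i` is an active site of `l` relative to `B`. -/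
def ActiveSite (B : Set (List ℕ)) (l : List ℕ) (i : ℕ) : Prop :=
  i ≤ l.length ∧ insertMax l i ∈ Av B

/-- The increasing permutation `1,2,…,n`. -/
def incrPerm (n : ℕ) : List ℕ :=
  (List.range n).map (· + 1)

/-- A permutation (as a list) is a vertical alternation: every entry in an even
(1-indexed) position lies above every entry in an odd position, or vice versa.
(Index `s : Fin l.length` corresponds to 1-indexed position `s + 1`.) -/
def VerticalAlternation (l : List ℕ) : Prop :=
  (∀ s t : Fin l.length, s.val % 2 = 1 → t.val % 2 = 0 → l.get t < l.get s) ∨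
  (∀ s t : Fin l.length, s.val % 2 = 1 → t.val % 2 = 0 → l.get s < l.get t)

/-- The subsequence of entries in positions congruent to `r` (0-indexed, mod 2)
is increasing. -/
def IncOnRes (l : List ℕ) (r : ℕ) : Prop :=
  ∀ s t : Fin l.length, s < t → s.val % 2 = r → t.val % 2 = r → l.get s < l.get t

/-- The subsequence of entries in positions congruent to `r` (0-indexed, mod 2)
is decreasing. -/
def DecOnRes (l : List ℕ) (r : ℕ) : Prop :=
  ∀ s t : Fin l.length, s < t → s.val % 2 = r → t.val % 2 = r → l.get t < l.get s

/-- A vertical parallel alternation: a vertical alternation of even length whose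
odd-position and even-position subsequences are both increasing or both decreasing. -/
def IsVertParallel (l : List ℕ) : Prop :=
  VerticalAlternation l ∧ Even l.length ∧
    ((IncOnRes l 0 ∧ IncOnRes l 1) ∨ (DecOnRes l 0 ∧ DecOnRes l 1))

/-- A vertical wedge alternation: a vertical alternation of even length for which one of
the odd-position and even-position subsequences is increasing and the other decreasing. -/
def IsVertWedge (l : List ℕ) : Prop :=
  VerticalAlternation l ∧ Even l.length ∧
    ((IncOnRes l 0 ∧ DecOnRes l 1) ∨ (DecOnRes l 0 ∧ IncOnRes l 1))

/-- The vertical parallel alternation `σ_m`, with `σ_m(2i−1) = m+1−i` and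
`σ_m(2i) = 2m+1−i` (1-indexed). -/
def sigmaAlt (m : ℕ) : List ℕ :=
  (List.range (2 * m)).map (fun j => if j % 2 = 0 then m - j / 2 else 2 * m - j / 2)

/-- The vertical wedge alternation `τ_m`, with `τ_m(2i−1) = m+i` and
`τ_m(2i) = m+1−i` (1-indexed). -/
def tauAlt (m : ℕ) : List ℕ :=
  (List.range (2 * m)).map (fun j => if j % 2 = 0 then m + j / 2 + 1 else m - j / 2)

/-- Standardization: replace each entry of `l` by its rank among the entries of `l`. -/
def stList (l : List ℕ) : List ℕ :=
  l.map (fun x => (l.filter (fun y => y ≤ x)).length)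

/-!
The pattern `σ_m` avoids `123`, `3142` and `3412`: an ascent of `σ_m` always goes from an
even to an odd (0-indexed) position, and every entry at an odd position exceeds every entry at an
even one. Pattern containment is transitive, so if every `β ∈ B` contains one of the three
patterns, then every `σ_m` lies in `Av B`.

Conversely, let `β` avoid the three patterns and let `c + 1` be the smallest value ending an
ascent of `β`. An ascent starting at a value `> c` would, together with the ascent ending at
`c + 1`, produce one of the patterns, so every ascent goes from a value `≤ c` to a value `> c`:
the entries `≤ c` and those `> c` form two decreasing subsequences. Placing them on the even and
odd positions of `σ_m` embeds `β` into `σ_m` whenever `|β| ≤ m`, so only the `σ_m` with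
`m < |β|` avoid `β`.
-/

theorem IsPermList.nodup {l : List ℕ} (h : IsPermList l) : l.Nodup :=
  h.nodup_iff.2 (List.nodup_range.map (add_left_injective 1))

theorem PContains.trans {π β γ : List ℕ} (h₁ : PContains π β) (h₂ : PContains β γ) :
    PContains π γ := by
  obtain ⟨f, hf, hfβ⟩ := h₁
  obtain ⟨g, hg, hgγ⟩ := h₂
  exact ⟨f ∘ g, hf.comp hg, fun s t => (hfβ _ _).trans (hgγ s t)⟩

section Patterns

variable {π : List ℕ} {i j k l : Fin π.length}

theorem PContains.of_123 (hij : i < j) (hjk : j < k)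
    (h₁ : π.get i < π.get j) (h₂ : π.get j < π.get k) : PContains π [1,2,3] := by
  refine ⟨![i, j, k], Fin.strictMono_iff_lt_succ.2 ?_, ?_⟩
  · intro a; fin_cases a <;> simpa
  · simp only [List.get_eq_getElem] at *
    intro s t; fin_cases s <;> fin_cases t <;> simp <;> omega

theorem PContains.of_3142 (hij : i < j) (hjk : j < k) (hkl : k < l)
    (h₁ : π.get j < π.get l) (h₂ : π.get l < π.get i) (h₃ : π.get i < π.get k) :
    PContains π [3,1,4,2] := by
  refine ⟨![i, j, k, l], Fin.strictMono_iff_lt_succ.2 ?_, ?_⟩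
  · intro a; fin_cases a <;> simpa
  · simp only [List.get_eq_getElem] at *
    intro s t; fin_cases s <;> fin_cases t <;> simp <;> omega

theorem PContains.of_3412 (hij : i < j) (hjk : j < k) (hkl : k < l)
    (h₁ : π.get k < π.get l) (h₂ : π.get l < π.get i) (h₃ : π.get i < π.get j) :
    PContains π [3,4,1,2] := by
  refine ⟨![i, j, k, l], Fin.strictMono_iff_lt_succ.2 ?_, ?_⟩
  · intro a; fin_cases a <;> simpa
  · simp only [List.get_eq_getElem] at *
    intro s t; fin_cases s <;> fin_cases t <;> simp <;> omega

end Patterns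

section SigmaAlt

variable (m : ℕ)

theorem sigmaAlt_length : (sigmaAlt m).length = 2 * m := by simp [sigmaAlt]

theorem sigmaAlt_injective : Function.Injective sigmaAlt := fun a b hab => by
  have := congrArg List.length hab
  rw [sigmaAlt_length, sigmaAlt_length] at this
  omega

theorem sigmaAlt_get (j : Fin (sigmaAlt m).length) :
    (sigmaAlt m).get j = if j.val % 2 = 0 then m - j.val / 2 else 2 * m - j.val / 2 := by
  rw [List.get_eq_getElem]
  simp [sigmaAlt]

theorem sigmaAlt_index_lt (j : Fin (sigmaAlt m).length) : j.val < 2 * m :=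
  sigmaAlt_length m ▸ j.isLt

theorem isPermList_sigmaAlt : IsPermList (sigmaAlt m) := by
  unfold IsPermList
  rw [sigmaAlt_length]
  refine List.Subperm.perm_of_length_le (List.Nodup.subperm ?_ ?_) (by simp [sigmaAlt])
  · refine List.nodup_range.map_on fun x hx y hy hxy => ?_
    simp only [List.mem_range] at hx hy
    split_ifs at hxy <;> omega
  · intro x hx
    simp only [sigmaAlt, List.mem_map, List.mem_range] at hx ⊢
    obtain ⟨j, hj, rfl⟩ := hx
    split_ifs
    · exact ⟨m - j / 2 - 1, by omega, by omega⟩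
    · exact ⟨2 * m - j / 2 - 1, by omega, by omega⟩

variable {m}

theorem sigmaAlt_get_even_lt_get_odd {j k : Fin (sigmaAlt m).length}
    (hj : j.val % 2 = 0) (hk : k.val % 2 = 1) : (sigmaAlt m).get j < (sigmaAlt m).get k := by
  have := sigmaAlt_index_lt m k
  rw [sigmaAlt_get, sigmaAlt_get, if_pos hj, if_neg (by omega)]
  omega

theorem sigmaAlt_parity_of_ascent {j k : Fin (sigmaAlt m).length} (hjk : j < k)
    (hv : (sigmaAlt m).get j < (sigmaAlt m).get k) : j.val % 2 = 0 ∧ k.val % 2 = 1 := by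
  have := sigmaAlt_index_lt m k
  rw [sigmaAlt_get, sigmaAlt_get] at hv
  rw [Fin.lt_def] at hjk
  split_ifs at hv <;> omega

theorem IsOccurrence.sigmaAlt_parity {β : List ℕ} {f : Fin β.length → Fin (sigmaAlt m).length}
    (hf : IsOccurrence (sigmaAlt m) β f) {s t : Fin β.length} (hst : s < t)
    (hv : β.get s < β.get t) : (f s).val % 2 = 0 ∧ (f t).val % 2 = 1 :=
  sigmaAlt_parity_of_ascent (hf.1 hst) ((hf.2 s t).2 hv)

theorem sigmaAlt_avoids_123 : PAvoids (sigmaAlt m) [1,2,3] := by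
  rintro ⟨f, hf⟩
  have h₀₁ := hf.sigmaAlt_parity (s := ⟨0, by simp⟩) (t := ⟨1, by simp⟩)
    (by decide) (by decide)
  have h₁₂ := hf.sigmaAlt_parity (s := ⟨1, by simp⟩) (t := ⟨2, by simp⟩)
    (by decide) (by decide)
  omega

theorem sigmaAlt_avoids_3142 : PAvoids (sigmaAlt m) [3,1,4,2] := by
  rintro ⟨f, hf⟩
  have h₀₂ := hf.sigmaAlt_parity (s := ⟨0, by simp⟩) (t := ⟨2, by simp⟩)
    (by decide) (by decide)
  have h₁₃ := hf.sigmaAlt_parity (s := ⟨1, by simp⟩) (t := ⟨3, by simp⟩)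
    (by decide) (by decide)
  exact ((hf.2 ⟨3, by simp⟩ ⟨0, by simp⟩).2 (by decide)).not_gt
    (sigmaAlt_get_even_lt_get_odd h₀₂.1 h₁₃.2)

theorem sigmaAlt_avoids_3412 : PAvoids (sigmaAlt m) [3,4,1,2] := by
  rintro ⟨f, hf⟩
  have h₀₁ := hf.sigmaAlt_parity (s := ⟨0, by simp⟩) (t := ⟨1, by simp⟩)
    (by decide) (by decide)
  have h₂₃ := hf.sigmaAlt_parity (s := ⟨2, by simp⟩) (t := ⟨3, by simp⟩)
    (by decide) (by decide)
  exact ((hf.2 ⟨3, by simp⟩ ⟨0, by simp⟩).2 (by decide)).not_gt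
    (sigmaAlt_get_even_lt_get_odd h₀₁.1 h₂₃.2)

end SigmaAlt

section Straddle

variable {β : List ℕ}

theorem contains_pattern_of_ascent_below_ascent {i j s t : Fin β.length} (hij : i < j)
    (hst : s < t) (h₁ : β.get i < β.get j) (h₂ : β.get j < β.get s) (h₃ : β.get s < β.get t) :
    PContains β [1,2,3] ∨ PContains β [3,1,4,2] ∨ PContains β [3,4,1,2] := by
  rcases lt_or_gt_of_ne (show i ≠ s by rintro rfl; omega) with his | hsi
  · exact .inl (.of_123 his hst (h₁.trans h₂) h₃)
  rcases lt_or_gt_of_ne (show t ≠ i by rintro rfl; omega) with hti | hit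
  · exact .inr (.inr (.of_3412 hst hti hij h₁ h₂ h₃))
  rcases lt_or_gt_of_ne (show t ≠ j by rintro rfl; omega) with htj | hjt
  · exact .inr (.inl (.of_3142 hsi hit htj h₁ h₂ h₃))
  · exact .inl (.of_123 hij hjt h₁ (h₂.trans h₃))

/-- For a list without repetitions: the entries `≤ c` and the entries `> c` both form
decreasing subsequences. -/
def AscentsStraddle (β : List ℕ) (c : ℕ) : Prop :=
  ∀ s t : Fin β.length, s < t → β.get s < β.get t → β.get s ≤ c ∧ c < β.get t

theorem exists_ascentsStraddle (hnd : β.Nodup) (h123 : PAvoids β [1,2,3])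
    (h3142 : PAvoids β [3,1,4,2]) (h3412 : PAvoids β [3,4,1,2]) : ∃ c, AscentsStraddle β c := by
  set S : Set ℕ := {v | ∃ i j : Fin β.length, i < j ∧ β.get i < β.get j ∧ β.get j = v}
  refine ⟨sInf S - 1, fun s t hst hv => ?_⟩
  have htS : β.get t ∈ S := ⟨s, t, hst, hv, rfl⟩
  have hle : sInf S ≤ β.get t := Nat.sInf_le htS
  obtain ⟨i, j, hij, hij', hj⟩ := Nat.sInf_mem ⟨_, htS⟩
  refine ⟨?_, by omega⟩
  by_contra hs
  rcases (show β.get j ≤ β.get s by omega).eq_or_lt with hjs | hjs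
  · obtain rfl := hnd.get_inj_iff.1 hjs
    exact h123 (.of_123 hij hst hij' hv)
  · rcases contains_pattern_of_ascent_below_ascent hij hst hij' hjs hv with h | h | h
    exacts [h123 h, h3142 h, h3412 h]

theorem AscentsStraddle.lt_iff {c : ℕ} (hc : AscentsStraddle β c) (hnd : β.Nodup)
    {s t : Fin β.length} (hside : β.get s ≤ c ↔ β.get t ≤ c) :
    β.get s < β.get t ↔ t < s := by
  constructor
  · intro hv
    rcases lt_trichotomy s t with hst | rfl | hts
    · have := hc s t hst hv
      exact absurd (hside.1 this.1) this.2.not_ge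
    · exact absurd hv (lt_irrefl _)
    · exact hts
  · intro hts
    rcases lt_trichotomy (β.get t) (β.get s) with hv | hv | hv
    · have := hc t s hts hv
      exact absurd (hside.2 this.1) this.2.not_ge
    · exact absurd (hnd.get_inj_iff.1 hv) hts.ne
    · exact hv

/-- The embedding sends entry `u` of `β` to position `2 * (m - |β| + u)` of `σ_m` if `β u ≤ c`
and to the next (odd) position otherwise; the values there are `|β| - u` and `m + |β| - u`. -/
theorem AscentsStraddle.sigmaAlt_contains {c m : ℕ} (hc : AscentsStraddle β c) (hnd : β.Nodup)
    (hm : β.length ≤ m) : PContains (sigmaAlt m) β := by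
  let e : Fin β.length → Fin (sigmaAlt m).length := fun u =>
    ⟨2 * (m - β.length + u) + if β.get u ≤ c then 0 else 1, by
      rw [sigmaAlt_length]; have := u.isLt; split_ifs <;> omega⟩
  have he : ∀ u, (sigmaAlt m).get (e u) =
      if β.get u ≤ c then β.length - u else m + β.length - u := by
    intro u
    have := u.isLt
    rw [sigmaAlt_get]
    simp only [e]
    split_ifs <;> omega
  refine ⟨e, fun s t hst => ?_, fun s t => ?_⟩
  · rw [Fin.lt_def] at hst ⊢
    simp only [e]
    split_ifs <;> omega
  · have hlt := s.isLt
    have htt := t.isLt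
    rw [he, he]
    by_cases hs : β.get s ≤ c <;> by_cases ht : β.get t ≤ c <;> simp only [hs, ht, if_true,
      if_false]
    · rw [hc.lt_iff hnd (iff_of_true hs ht), Fin.lt_def]; omega
    · exact iff_of_true (by omega) (by omega)
    · exact iff_of_false (by omega) (by omega)
    · rw [hc.lt_iff hnd (iff_of_false hs ht), Fin.lt_def]; omega

end Straddle

theorem sigmaAlt_mem_Av {B : Set (List ℕ)}
    (hB : ∀ β ∈ B, ¬ (PAvoids β [1,2,3] ∧ PAvoids β [3,1,4,2] ∧ PAvoids β [3,4,1,2]))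
    (m : ℕ) : sigmaAlt m ∈ Av B :=
  ⟨isPermList_sigmaAlt m, fun β hβ hσβ => hB β hβ
    ⟨fun h => sigmaAlt_avoids_123 (hσβ.trans h), fun h => sigmaAlt_avoids_3142 (hσβ.trans h),
      fun h => sigmaAlt_avoids_3412 (hσβ.trans h)⟩⟩

theorem stmt3_general (B : Set (List ℕ)) (hB : ∀ β ∈ B, IsPermList β) :
    {π | (∃ m : ℕ, 1 ≤ m ∧ π = sigmaAlt m) ∧ π ∈ Av B}.Finite ↔
      ∃ β ∈ B, PAvoids β [1,2,3] ∧ PAvoids β [3,1,4,2] ∧ PAvoids β [3,4,1,2] := by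
  constructor
  · intro hfin
    by_contra hno
    have hsub : sigmaAlt '' Set.Ici 1 ⊆
        {π | (∃ m : ℕ, 1 ≤ m ∧ π = sigmaAlt m) ∧ π ∈ Av B} := by
      rintro _ ⟨m, hm, rfl⟩
      exact ⟨⟨m, hm, rfl⟩, sigmaAlt_mem_Av (fun β hβ h => hno ⟨β, hβ, h⟩) m⟩
    exact ((Set.Ici_infinite 1).image sigmaAlt_injective.injOn) (hfin.subset hsub)
  · rintro ⟨β, hβ, h123, h3142, h3412⟩
    have hnd := (hB β hβ).nodup
    obtain ⟨c, hc⟩ := exists_ascentsStraddle hnd h123 h3142 h3412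
    refine ((Set.finite_Iio β.length).image sigmaAlt).subset ?_
    rintro _ ⟨⟨m, -, rfl⟩, -, hσ⟩
    exact ⟨m, not_le.1 fun hm => hσ β hβ (hc.sigmaAlt_contains hnd hm), rfl⟩

/-- `Av(B)` contains only finitely many of the vertical parallel
alternations `σ_m` iff `B` contains a permutation avoiding `123`, `3142` and `3412`. -/
theorem stmt3 (B : Set (List ℕ)) (hBfin : B.Finite) (hB : ∀ β ∈ B, IsPermList β) :
    {π | (∃ m : ℕ, 1 ≤ m ∧ π = sigmaAlt m) ∧ π ∈ Av B}.Finite ↔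
      ∃ β ∈ B, PAvoids β [1,2,3] ∧ PAvoids β [3,1,4,2] ∧ PAvoids β [3,4,1,2] :=
  stmt3_general B hB
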